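/- arXiv:1710.03173 — 2 statements merged into one kernel-verified Lean document; each statement's English description precedes it below -/
import Mathlib

section
/- Let ℓ be a prime number, and let L ⊆ L̃ ⊆ Ẽ be finite separable field extensions such that the degree [Ẽ : L̃] is coprime to ℓ. Let Ê be a Galois closure of Ẽ over L. Then for every Sylow ℓ-subgroup S of Gal(Ê/L), there exists σ ∈ Gal(Ê/L) such that the compositum L̃ · Ê^S inside Ê contains σ(Ẽ). -/
/-!
Galois theory turns the claim into group theory: with `H = Gal(Ê/Ẽ) ≤ K = Gal(Ê/L̃)`, the
compositum `L̃ · Ê^S` is the fixed field of `K ∩ S`, and `σ(Ẽ)` that of `σ H σ⁻¹`. The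
`ℓ`-group `K ∩ S` acts on `K/H`, a set of size `[Ẽ : L̃]`, prime to `ℓ`, so it fixes a coset
`σH`, i.e. `K ∩ S ≤ σ H σ⁻¹`.
-/

open scoped Pointwise
open Module

theorem Subgroup.exists_le_conj_smul_of_not_dvd_relIndex {G : Type*} [Group G] {p : ℕ}
    [Fact p.Prime] {H K P : Subgroup G} (hPK : P ≤ K) (hP : IsPGroup p P)
    (hp : ¬ p ∣ H.relIndex K) :
    ∃ g : G, P ≤ MulAut.conj g • H := by
  have hP' : IsPGroup p (P.subgroupOf K) :=
    hP.of_equiv (Subgroup.subgroupOfEquivOfLe hPK).symm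
  obtain ⟨q, hq⟩ := hP'.nonempty_fixed_point_of_prime_not_dvd_card (K ⧸ H.subgroupOf K) hp
  obtain ⟨k, rfl⟩ := QuotientGroup.mk_surjective q
  refine ⟨k, fun x hx => ?_⟩
  have hfix : (QuotientGroup.mk k : K ⧸ H.subgroupOf K) = QuotientGroup.mk (⟨x, hPK hx⟩ * k) :=
    (hq ⟨⟨x, hPK hx⟩, hx⟩).symm
  rw [QuotientGroup.eq, Subgroup.mem_subgroupOf] at hfix
  rw [Subgroup.mem_pointwise_smul_iff_inv_smul_mem]
  simpa [MulAut.conj, mul_assoc] using hfix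

theorem IsGalois.relIndex_fixingSubgroup {F E : Type*} [Field F] [Field E] [Algebra F E]
    [FiniteDimensional F E] [IsGalois F E] {K M : IntermediateField F E} (h : K ≤ M) :
    M.fixingSubgroup.relIndex K.fixingSubgroup = finrank K (IntermediateField.extendScalars h) := by
  have htower := Module.finrank_mul_finrank F K (IntermediateField.extendScalars h)
  have hrel := Subgroup.relIndex_mul_index (IntermediateField.fixingSubgroup_le h)
  rw [← IntermediateField.finrank_eq_fixingSubgroup_index,
    ← IntermediateField.finrank_eq_fixingSubgroup_index] at hrel
  have hM : finrank F (IntermediateField.extendScalars h) = finrank F M := rfl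
  rw [hM, ← hrel, mul_comm] at htower
  exact (Nat.eq_of_mul_eq_mul_right finrank_pos htower).symm

theorem stmt_0_general {ℓ : ℕ} (hℓ : ℓ.Prime) {L Ehat : Type*} [Field L] [Field Ehat]
    [Algebra L Ehat] [FiniteDimensional L Ehat] [IsGalois L Ehat]
    (Lt Et : IntermediateField L Ehat) (hLE : Lt ≤ Et)
    (hcop : Nat.Coprime (Module.finrank ↥Lt ↥(IntermediateField.extendScalars hLE)) ℓ)
    (S : Sylow ℓ (Ehat ≃ₐ[L] Ehat)) :
    ∃ σ : Ehat ≃ₐ[L] Ehat,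
      Et.map σ.toAlgHom ≤ Lt ⊔ IntermediateField.fixedField (S : Subgroup (Ehat ≃ₐ[L] Ehat)) := by
  have : Fact ℓ.Prime := ⟨hℓ⟩
  have hndvd : ¬ ℓ ∣ Et.fixingSubgroup.relIndex Lt.fixingSubgroup := by
    rw [IsGalois.relIndex_fixingSubgroup hLE]
    exact fun hdvd => hℓ.one_lt.ne' (hcop.symm.eq_one_of_dvd hdvd)
  obtain ⟨σ, hσ⟩ := Subgroup.exists_le_conj_smul_of_not_dvd_relIndex inf_le_left
    (S.isPGroup'.to_inf_right (H := Lt.fixingSubgroup)) hndvd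
  refine ⟨σ, ?_⟩
  rwa [← IsGalois.fixedField_fixingSubgroup (Lt ⊔ _), IntermediateField.fixingSubgroup_sup,
    IntermediateField.fixingSubgroup_fixedField, IntermediateField.le_iff_le,
    IsGalois.map_fixingSubgroup]

/-- Let `ℓ` be a prime, `L ⊆ L̃ ⊆ Ẽ` finite separable field extensions
with `[Ẽ : L̃]` coprime to `ℓ`, and let `Ê` be a Galois closure of `Ẽ` over `L`.
Then for every Sylow `ℓ`-subgroup `S` of `Gal(Ê/L)` there is `σ ∈ Gal(Ê/L)` such that
the compositum `L̃ ⊔ Ê^S` contains `σ(Ẽ)`. -/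
theorem stmt_0 {ℓ : ℕ} (hℓ : ℓ.Prime) {L Ehat : Type*} [Field L] [Field Ehat]
    [Algebra L Ehat] [FiniteDimensional L Ehat] [IsGalois L Ehat]
    (Lt Et : IntermediateField L Ehat) (hLE : Lt ≤ Et)
    (hGalClosure : IntermediateField.normalClosure L (↥Et) Ehat = ⊤)
    (hcop : Nat.Coprime (Module.finrank ↥Lt ↥(IntermediateField.extendScalars hLE)) ℓ)
    (S : Sylow ℓ (Ehat ≃ₐ[L] Ehat)) :
    ∃ σ : Ehat ≃ₐ[L] Ehat,
      Et.map σ.toAlgHom ≤ Lt ⊔ IntermediateField.fixedField (S : Subgroup (Ehat ≃ₐ[L] Ehat)) :=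
  stmt_0_general hℓ Lt Et hLE hcop S
end

section
/- Let F be a field, Z an F-scheme of finite type, ℓ a prime, and d the smallest positive integer coprime to ℓ such that Z has a point over some finite separable extension of F of degree d. If E/F is a finite separable extension of degree d with ξ ∈ Z(E), and σ₁, …, σ_d are the distinct F-embeddings of E into a separable closure of F, then the points σ₁(ξ), …, σ_d(ξ) ∈ Z(F^sep) are pairwise distinct. -/
open AlgebraicGeometry CategoryTheory

universe u

/-- `Z` has a point over the `F`-algebra `A`: a morphism `Spec A ⟶ Z` over `Spec F`. -/
def HasPoint {F : Type u} [Field F] (Z : Scheme.{u}) (f : Z ⟶ Spec (CommRingCat.of F))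
    (A : Type u) [CommRing A] [Algebra F A] : Prop :=
  ∃ g : Spec (CommRingCat.of A) ⟶ Z,
    g ≫ f = Spec.map (CommRingCat.ofHom (algebraMap F A))

/-!
A point `ξ : Spec E ⟶ Z` over `F` factors through the residue field `κ(z)` of its image, and
`F ⊆ κ(z) ⊆ E`. So `κ(z)` is finite separable over `F` of degree dividing `d`, hence coprime to
`ℓ`, and `Z` has a `κ(z)`-point; minimality of `d` forces `κ(z) = E`. Then `ξ` is a monomorphism
(an isomorphism onto `Spec κ(z)` followed by the monomorphism `Spec κ(z) ⟶ Z`), so distinct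
embeddings `σ` give distinct points `σ(ξ)`.
-/

section FieldTheory

variable {F K E : Type*} [Field F] [Field K] [Field E] [Algebra F K] [Algebra F E]

theorem AlgHom.finrank_dvd [FiniteDimensional F E] (ψ : K →ₐ[F] E) :
    Module.finrank F K ∣ Module.finrank F E := by
  let : Algebra K E := ψ.toRingHom.toAlgebra
  have : IsScalarTower F K E := IsScalarTower.of_algebraMap_eq fun x ↦ (ψ.commutes x).symm
  have : FiniteDimensional K E := FiniteDimensional.right F K E
  exact Module.finrank_dvd_finrank_right F K E

theorem AlgHom.bijective_of_finrank_le [FiniteDimensional F E] (ψ : K →ₐ[F] E)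
    (h : Module.finrank F E ≤ Module.finrank F K) : Function.Bijective ψ := by
  refine ⟨ψ.injective, fun x ↦ ?_⟩
  have hrange : LinearMap.range ψ.toLinearMap = ⊤ :=
    Submodule.eq_top_of_finrank_eq <| le_antisymm (Submodule.finrank_le _) <|
      (LinearMap.finrank_range_of_inj (f := ψ.toLinearMap) ψ.injective).symm ▸ h
  exact LinearMap.range_eq_top.mp hrange x

end FieldTheory

namespace AlgebraicGeometry.Scheme

variable {F : Type u} [Field F] {Z : Scheme.{u}}

theorem exists_eq_specMap_comp_fromSpecResidueField (f : Z ⟶ Spec (CommRingCat.of F))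
    {K : Type u} [Field K] [Algebra F K] (g : Spec (CommRingCat.of K) ⟶ Z)
    (hg : g ≫ f = Spec.map (CommRingCat.ofHom (algebraMap F K))) :
    ∃ (z : Z) (_ : Algebra F (Z.residueField z)) (ψ : Z.residueField z →ₐ[F] K),
      HasPoint Z f (Z.residueField z) ∧
        g = Spec.map (CommRingCat.ofHom ψ.toRingHom) ≫ Z.fromSpecResidueField z := by
  obtain ⟨⟨z, φ⟩, rfl⟩ := (Z.SpecToEquivOfField K).symm.surjective g
  rw [SpecToEquivOfField_symm_apply] at hg ⊢
  let ρ := Spec.preimage (Z.fromSpecResidueField z ≫ f)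
  have hρ : Spec.map ρ = Z.fromSpecResidueField z ≫ f := Spec.map_preimage _
  let : Algebra F (Z.residueField z) := ρ.hom.toAlgebra
  have hφ : ρ ≫ φ = CommRingCat.ofHom (algebraMap F K) :=
    Spec.map_injective <| by rw [Spec.map_comp, hρ, ← hg, Category.assoc]
  refine ⟨z, inferInstance, ⟨φ.hom, fun x ↦ congr($hφ x)⟩, ⟨_, hρ.symm⟩, rfl⟩

theorem injective_specMap_comp_of_mono {E L : Type u} [Field E] [CommRing L] [Algebra F E]
    [Algebra F L] (g : Spec (CommRingCat.of E) ⟶ Z) [Mono g] :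
    Function.Injective fun σ : E →ₐ[F] L ↦ Spec.map (CommRingCat.ofHom σ.toRingHom) ≫ g :=
  fun _ _ h ↦ AlgHom.coe_ringHom_injective <|
    congrArg CommRingCat.Hom.hom (Spec.map_injective ((cancel_mono g).mp h))

end AlgebraicGeometry.Scheme

theorem stmt_7_general {F : Type u} [Field F] {ℓ : ℕ} (d : ℕ)
    (Z : Scheme.{u}) (f : Z ⟶ Spec (CommRingCat.of F))
    (hd_cop : Nat.Coprime d ℓ)
    (hmin : ∀ (E' : Type u) [Field E'] [Algebra F E'] [FiniteDimensional F E']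
      [Algebra.IsSeparable F E'], Nat.Coprime (Module.finrank F E') ℓ →
      HasPoint Z f E' → d ≤ Module.finrank F E')
    (E : Type u) [Field E] [Algebra F E] [FiniteDimensional F E] [Algebra.IsSeparable F E]
    (hdeg : Module.finrank F E = d)
    (g : Spec (CommRingCat.of E) ⟶ Z)
    (hg : g ≫ f = Spec.map (CommRingCat.ofHom (algebraMap F E))) :
    Function.Injective (fun σ : E →ₐ[F] SeparableClosure F =>
      Spec.map (CommRingCat.ofHom σ.toRingHom) ≫ g) := by
  obtain ⟨z, _, ψ, hz, rfl⟩ := Scheme.exists_eq_specMap_comp_fromSpecResidueField f g hg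
  have : FiniteDimensional F (Z.residueField z) :=
    .of_injective ψ.toLinearMap ψ.injective
  have := Algebra.IsSeparable.of_algHom F E ψ
  have hcop : (Module.finrank F (Z.residueField z)).Coprime ℓ :=
    hd_cop.coprime_dvd_left (hdeg ▸ ψ.finrank_dvd)
  have hψ : Function.Bijective ψ := ψ.bijective_of_finrank_le (hdeg ▸ hmin _ hcop hz)
  have : IsIso (CommRingCat.ofHom ψ.toRingHom) :=
    (ConcreteCategory.isIso_iff_bijective _).mpr hψ
  exact Scheme.injective_specMap_comp_of_mono _

/-- Let `F` be a field, `Z` an `F`-scheme of finite type, `ℓ` a prime,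
and `d` the smallest positive integer coprime to `ℓ` such that `Z` has a point over some
finite separable extension of `F` of degree `d`.  If `E/F` is a finite separable
extension of degree `d` with a point `ξ ∈ Z(E)` (the morphism `g`), and
`σ₁, …, σ_d : E →ₐ[F] F^sep` are the distinct `F`-embeddings of `E` into a separable
closure, then the induced points `σᵢ(ξ) ∈ Z(F^sep)` are pairwise distinct; i.e. the map
`σ ↦ σ(ξ)` is injective. -/
theorem stmt_7 {F : Type u} [Field F] {ℓ : ℕ} (hℓ : ℓ.Prime) (d : ℕ)
    (Z : Scheme.{u}) (f : Z ⟶ Spec (CommRingCat.of F))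
    [LocallyOfFiniteType f] [QuasiCompact f]
    (hd_pos : 0 < d) (hd_cop : Nat.Coprime d ℓ)
    (hmin : ∀ (E' : Type u) [Field E'] [Algebra F E'] [FiniteDimensional F E']
      [Algebra.IsSeparable F E'], Nat.Coprime (Module.finrank F E') ℓ →
      HasPoint Z f E' → d ≤ Module.finrank F E')
    (E : Type u) [Field E] [Algebra F E] [FiniteDimensional F E] [Algebra.IsSeparable F E]
    (hdeg : Module.finrank F E = d)
    (g : Spec (CommRingCat.of E) ⟶ Z)
    (hg : g ≫ f = Spec.map (CommRingCat.ofHom (algebraMap F E))) :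
    Function.Injective (fun σ : E →ₐ[F] SeparableClosure F =>
      Spec.map (CommRingCat.ofHom σ.toRingHom) ≫ g) :=
  stmt_7_general d Z f hd_cop hmin E hdeg g hg
end
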